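/- arXiv:0902.1565 — 3 statements merged into one kernel-verified Lean document; each statement's English description precedes it below -/
import Mathlib

section
/- The Kalman gain K = P₋HᵀS⁻¹ minimizes trace[(I − KH)P₋(I − KH)ᵀ + KRKᵀ] over all n×m matrices K, where S = HP₋Hᵀ + R. -/
/-!
Expanding the Joseph form gives `P - L H P - P Hᵀ Lᵀ + L S Lᵀ`, a quadratic in `L` with
`S = H P Hᵀ + R`. Since `K S = P Hᵀ` and `S` is symmetric, completing the square writes it as
its value at `K` plus `(L - K) S (L - K)ᵀ`, whose trace is nonnegative because `S` is positive
definite.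
-/

open Matrix

variable {ι κ α : Type*} [Fintype κ] [CommRing α]

lemma sub_mul_mul_transpose_sub {S : Matrix κ κ α} {K L : Matrix ι κ α} (hS : Sᵀ = S) :
    (L - K) * S * (L - K)ᵀ = L * S * Lᵀ - L * (K * S)ᵀ - K * S * Lᵀ + K * S * Kᵀ := by
  simp only [transpose_sub, transpose_mul, hS, Matrix.sub_mul, Matrix.mul_sub, Matrix.mul_assoc]
  abel

variable [Fintype ι] [DecidableEq ι]

/-- The posterior covariance of a gain `K` in Joseph form. -/
def josephCov (P : Matrix ι ι α) (H : Matrix κ ι α) (R : Matrix κ κ α) (K : Matrix ι κ α) :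
    Matrix ι ι α :=
  (1 - K * H) * P * (1 - K * H)ᵀ + K * R * Kᵀ

lemma josephCov_eq (P : Matrix ι ι α) (H : Matrix κ ι α) (R : Matrix κ κ α)
    (K : Matrix ι κ α) :
    josephCov P H R K = P - K * (H * P) - P * Hᵀ * Kᵀ + K * (H * P * Hᵀ + R) * Kᵀ := by
  simp only [josephCov, transpose_sub, transpose_one, transpose_mul, Matrix.mul_add,
    Matrix.add_mul, Matrix.mul_sub, Matrix.sub_mul, Matrix.mul_assoc]
  noncomm_ring

lemma josephCov_eq_add_of_mul_eq {P : Matrix ι ι α} {H : Matrix κ ι α} {R : Matrix κ κ α}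
    {K : Matrix ι κ α} (hP : Pᵀ = P) (hS : (H * P * Hᵀ + R)ᵀ = H * P * Hᵀ + R)
    (hK : K * (H * P * Hᵀ + R) = P * Hᵀ) (L : Matrix ι κ α) :
    josephCov P H R L =
      josephCov P H R K + (L - K) * (H * P * Hᵀ + R) * (L - K)ᵀ := by
  have hHP : (P * Hᵀ)ᵀ = H * P := by rw [transpose_mul, transpose_transpose, hP]
  have hKHP : K * (H * P) = P * Hᵀ * Kᵀ := by
    rw [← hHP, ← hK, transpose_mul, hS, ← Matrix.mul_assoc]
  rw [josephCov_eq, josephCov_eq, sub_mul_mul_transpose_sub hS, hK, hHP, hKHP]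
  abel

theorem kalman_gain_minimizes_trace_general {n m : ℕ}
    (Pm : Matrix (Fin n) (Fin n) ℝ) (H : Matrix (Fin m) (Fin n) ℝ)
    (R : Matrix (Fin m) (Fin m) ℝ)
    (hP : Pm.PosSemidef)
    (hS : (H * Pm * Hᵀ + R).PosDef) :
    let S := H * Pm * Hᵀ + R
    let K := Pm * Hᵀ * S⁻¹
    ∀ K' : Matrix (Fin n) (Fin m) ℝ,
      ((1 - K * H) * Pm * (1 - K * H)ᵀ + K * R * Kᵀ).trace ≤
        ((1 - K' * H) * Pm * (1 - K' * H)ᵀ + K' * R * K'ᵀ).trace := by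
  intro S K K'
  have hKS : K * S = Pm * Hᵀ :=
    nonsing_inv_mul_cancel_right _ _ ((isUnit_iff_isUnit_det _).mp hS.isUnit)
  have hsplit := josephCov_eq_add_of_mul_eq (by simpa using hP.isHermitian.eq)
    (by simpa using hS.isHermitian.eq) hKS K'
  change (josephCov Pm H R K).trace ≤ (josephCov Pm H R K').trace
  rw [hsplit, trace_add, le_add_iff_nonneg_right]
  simpa using (hS.posSemidef.mul_mul_conjTranspose_same (K' - K)).trace_nonneg

/-- The Kalman gain `K = P₋HᵀS⁻¹` minimizes
`trace[(I − KH)P₋(I − KH)ᵀ + KRKᵀ]` over all `n × m` matrices `K`,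
where `S = HP₋Hᵀ + R`. -/
theorem kalman_gain_minimizes_trace {n m : ℕ}
    (Pm : Matrix (Fin n) (Fin n) ℝ) (H : Matrix (Fin m) (Fin n) ℝ)
    (R : Matrix (Fin m) (Fin m) ℝ)
    (hP : Pm.PosSemidef) (hR : R.PosSemidef)
    (hS : (H * Pm * Hᵀ + R).PosDef) :
    let S := H * Pm * Hᵀ + R
    let K := Pm * Hᵀ * S⁻¹
    ∀ K' : Matrix (Fin n) (Fin m) ℝ,
      ((1 - K * H) * Pm * (1 - K * H)ᵀ + K * R * Kᵀ).trace ≤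
        ((1 - K' * H) * Pm * (1 - K' * H)ᵀ + K' * R * K'ᵀ).trace :=
  kalman_gain_minimizes_trace_general Pm H R hP hS
end

section
/- Let S be symmetric positive definite of size m×m, ν ∈ ℝ^m nonzero, A a q×n full row rank matrix. Then the block matrix M = [[2(S ⊗ I_n), ν ⊗ Aᵀ], [νᵀ ⊗ A, 0]] applied to the vector (ℓ, λ) with ℓ = ([S⁻¹ν(νᵀS⁻¹ν)⁻¹] ⊗ [Aᵀ(AAᵀ)⁻¹]) c and λ = −2[(νᵀS⁻¹ν)⁻¹ ⊗ (AAᵀ)⁻¹] c yields (0, c) for any c ∈ ℝ^q. -/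
open Matrix Kronecker

/-!
Write `ℓ = u ⊗ w` with `u = s⁻¹ S⁻¹ν` and `w = Aᵀ(AAᵀ)⁻¹c`; every block of `M` acts on such
product vectors factor by factor. The top block row gives `2 (Su) ⊗ w + ν ⊗ Aᵀλ
= 2s⁻¹ ν ⊗ w - 2s⁻¹ ν ⊗ w = 0`, and the bottom one gives `(νᵀu) • Aw = c`, because `νᵀu = 1`
and `Aᵀ(AAᵀ)⁻¹` is a right inverse of `A`. The scalar `s = νᵀS⁻¹ν` is positive since `S⁻¹` is
positive definite, and `AAᵀ` is invertible since it has the rank of `A`.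
-/

namespace Matrix

variable {R : Type*} {l m n o : Type*} [Fintype m] [Fintype n]

section CommSemiring

variable [CommSemiring R]

theorem kronecker_mulVec_mul (B : Matrix l m R) (C : Matrix o n R) (u : m → R) (w : n → R) :
    (B ⊗ₖ C) *ᵥ (fun p => u p.1 * w p.2) = fun p => (B *ᵥ u) p.1 * (C *ᵥ w) p.2 := by
  ext ⟨i, j⟩
  simp only [mulVec, dotProduct, kroneckerMap_apply, Fintype.sum_prod_type, Finset.sum_mul_sum]
  exact Finset.sum_congr rfl fun _ _ => Finset.sum_congr rfl fun _ _ => by ring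

theorem of_mul_left_mulVec (ν : l → R) (B : Matrix o n R) (x : n → R) :
    (of fun p j => ν p.1 * B p.2 j : Matrix (l × o) n R) *ᵥ x = fun p => ν p.1 * (B *ᵥ x) p.2 := by
  ext p
  simp only [mulVec, dotProduct, of_apply, Finset.mul_sum, mul_assoc]

theorem of_mul_right_mulVec_mul (ν u : m → R) (B : Matrix o n R) (w : n → R) :
    (of fun j p => ν p.1 * B j p.2 : Matrix o (m × n) R) *ᵥ (fun p => u p.1 * w p.2) =
      (ν ⬝ᵥ u) • (B *ᵥ w) := by
  ext j
  simp only [mulVec, dotProduct, of_apply, Fintype.sum_prod_type, Finset.sum_mul_sum,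
    Pi.smul_apply, smul_eq_mul]
  exact Finset.sum_congr rfl fun _ _ => Finset.sum_congr rfl fun _ _ => by ring

end CommSemiring

theorem isUnit_of_rank_eq_card {K : Type*} [Field K] [DecidableEq n] {B : Matrix n n K}
    (h : B.rank = Fintype.card n) : IsUnit B := by
  rw [← mulVec_surjective_iff_isUnit]
  exact LinearMap.range_eq_top.mp <| Submodule.eq_top_of_finrank_eq <|
    h.trans (Module.finrank_fintype_fun_eq_card K).symm

theorem isUnit_self_mul_transpose {K : Type*} [Field K] [LinearOrder K] [IsStrictOrderedRing K]
    [DecidableEq m] {A : Matrix m n K} (hA : A.rank = Fintype.card m) : IsUnit (A * Aᵀ) :=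
  isUnit_of_rank_eq_card (by rw [rank_self_mul_transpose, hA])

end Matrix

/-- Solution of the saddle point system arising from the restricted-Kalman-gain
constrained optimization problem: the block matrix
`M = [[2(S ⊗ I_n), ν ⊗ Aᵀ], [νᵀ ⊗ A, 0]]` applied to
`(ℓ, λ)` with `ℓ = ([S⁻¹ν(νᵀS⁻¹ν)⁻¹] ⊗ [Aᵀ(AAᵀ)⁻¹]) c` and
`λ = −2[(νᵀS⁻¹ν)⁻¹ ⊗ (AAᵀ)⁻¹] c` yields `(0, c)`. -/
theorem saddle_point_system_solution {m n q : ℕ}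
    (S : Matrix (Fin m) (Fin m) ℝ) (ν : Fin m → ℝ) (A : Matrix (Fin q) (Fin n) ℝ)
    (hS : S.PosDef) (hν : ν ≠ 0) (hA : A.rank = q) (c : Fin q → ℝ) :
    let M : Matrix ((Fin m × Fin n) ⊕ Fin q) ((Fin m × Fin n) ⊕ Fin q) ℝ :=
      Matrix.fromBlocks
        (2 • (S ⊗ₖ (1 : Matrix (Fin n) (Fin n) ℝ)))
        (Matrix.of fun p j => ν p.1 * Aᵀ p.2 j)
        (Matrix.of fun j p => ν p.1 * A j p.2)
        0
    let s : ℝ := ν ⬝ᵥ S⁻¹.mulVec ν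
    let ℓ : Fin m × Fin n → ℝ :=
      fun p => (S⁻¹.mulVec ν p.1 * s⁻¹) * (Aᵀ * (A * Aᵀ)⁻¹).mulVec c p.2
    let lam : Fin q → ℝ := -2 • (s⁻¹ • (A * Aᵀ)⁻¹.mulVec c)
    M.mulVec (Sum.elim ℓ lam) = Sum.elim (0 : Fin m × Fin n → ℝ) c := by
  intro M s ℓ lam
  have hs : s ≠ 0 := (by simpa using hS.inv.dotProduct_mulVec_pos hν : 0 < s).ne'
  have hAAt : IsUnit (A * Aᵀ) := isUnit_self_mul_transpose (by rw [hA, Fintype.card_fin])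
  set u : Fin m → ℝ := s⁻¹ • S⁻¹ *ᵥ ν
  set w := (Aᵀ * (A * Aᵀ)⁻¹) *ᵥ c
  have hℓ : ℓ = fun p => u p.1 * w p.2 := by
    ext p; simp only [ℓ, u, Pi.smul_apply, smul_eq_mul, mul_comm s⁻¹]; rfl
  have hSu : S *ᵥ u = s⁻¹ • ν := by
    rw [mulVec_smul, mulVec_mulVec, mul_nonsing_inv _ ((isUnit_iff_isUnit_det S).mp hS.isUnit),
      one_mulVec]
  have hνu : ν ⬝ᵥ u = 1 := by rw [dotProduct_smul, smul_eq_mul, inv_mul_cancel₀ hs]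
  have hAw : A *ᵥ w = c := by
    rw [mulVec_mulVec, ← Matrix.mul_assoc, mul_nonsing_inv _ ((isUnit_iff_isUnit_det _).mp hAAt),
      one_mulVec]
  have hAtlam : Aᵀ *ᵥ lam = (-2 * s⁻¹) • w := by
    simp only [lam, w, mulVec_smul, ← mulVec_mulVec]
    module
  rw [fromBlocks_mulVec, Sum.elim_comp_inl, Sum.elim_comp_inr, hℓ, smul_mulVec,
    kronecker_mulVec_mul, of_mul_left_mulVec, of_mul_right_mulVec_mul, one_mulVec, hSu, hAtlam,
    hνu, hAw, zero_mulVec, one_smul, add_zero]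
  congr 1
  ext p
  simp only [Pi.add_apply, Pi.smul_apply, smul_eq_mul, Pi.zero_apply]
  ring
end

section
/- The weighted least squares fusion solution equals the Kalman update: with H_F = [I; H], R_F = blockdiag(P₋, R), z_F = [x̂₋; z], and S = HP₋Hᵀ + R invertible, P₋ and R symmetric positive definite, one has ((H_F)ᵀ(R_F)⁻¹H_F)⁻¹(H_F)ᵀ(R_F)⁻¹ z_F = x̂₋ + K(z − Hx̂₋), where K = P₋HᵀS⁻¹. -/
/-!
The information matrix `H_Fᵀ R_F⁻¹ H_F` of the stacked problem is `P₋⁻¹ + Hᵀ R⁻¹ H`, and the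
Woodbury identity inverts it as `P₋ - K H P₋`. Applied to `H_Fᵀ R_F⁻¹ z_F = P₋⁻¹ x̂₋ + Hᵀ R⁻¹ z`
this gives `x̂₋ - K H x̂₋ + (P₋ - K H P₋) Hᵀ R⁻¹ z`, and the last coefficient is `K` because
`P₋ Hᵀ = K S` and `S - H P₋ Hᵀ = R`.
-/

open Matrix

variable {α : Type*} [CommRing α] {n m : Type*} [Fintype n] [Fintype m] [DecidableEq m]

theorem inv_fromBlocks_zero_zero [DecidableEq n] {A : Matrix n n α} {D : Matrix m m α}
    (hA : IsUnit A.det) (hD : IsUnit D.det) :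
    (fromBlocks A 0 0 D)⁻¹ = fromBlocks A⁻¹ 0 0 D⁻¹ := by
  rw [inv_fromBlocks_zero₂₁_of_isUnit_iff _ _ _ (by simp [isUnit_iff_isUnit_det, hA, hD]),
    Matrix.mul_zero, Matrix.zero_mul, neg_zero]

theorem transpose_fromRows_one_mul_inv_fromBlocks [DecidableEq n] {P : Matrix n n α}
    {R : Matrix m m α} (hP : IsUnit P.det) (hR : IsUnit R.det) (H : Matrix m n α) :
    (fromRows (1 : Matrix n n α) H)ᵀ * (fromBlocks P 0 0 R)⁻¹ = fromCols P⁻¹ (Hᵀ * R⁻¹) := by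
  rw [inv_fromBlocks_zero_zero hP hR, transpose_fromRows, fromCols_mul_fromBlocks]
  simp

noncomputable def kalmanGain (P : Matrix n n α) (H : Matrix m n α) (R : Matrix m m α) :
    Matrix n m α :=
  P * Hᵀ * (H * P * Hᵀ + R)⁻¹

-- Woodbury identity
theorem inv_add_transpose_mul_inv_mul_eq_sub_kalmanGain [DecidableEq n] {P : Matrix n n α}
    {R : Matrix m m α} (H : Matrix m n α) (hP : IsUnit P.det) (hR : IsUnit R.det)
    (hS : IsUnit (H * P * Hᵀ + R).det) :
    (P⁻¹ + Hᵀ * R⁻¹ * H)⁻¹ = P - kalmanGain P H R * H * P := by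
  have hS' : IsUnit (R⁻¹⁻¹ + H * P⁻¹⁻¹ * Hᵀ) := by
    rwa [nonsing_inv_nonsing_inv _ hP, nonsing_inv_nonsing_inv _ hR, add_comm,
      isUnit_iff_isUnit_det]
  rw [add_mul_mul_inv_eq_sub _ _ _ _ ((isUnit_iff_isUnit_det _).2 (isUnit_nonsing_inv_det _ hP))
    ((isUnit_iff_isUnit_det _).2 (isUnit_nonsing_inv_det _ hR)) hS',
    nonsing_inv_nonsing_inv _ hP, nonsing_inv_nonsing_inv _ hR, add_comm R, kalmanGain]

theorem sub_kalmanGain_mul_mul_mul_transpose_mul_inv_eq {P : Matrix n n α} {R : Matrix m m α}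
    (H : Matrix m n α) (hR : IsUnit R.det) (hS : IsUnit (H * P * Hᵀ + R).det) :
    (P - kalmanGain P H R * H * P) * Hᵀ * R⁻¹ = kalmanGain P H R := by
  have hPH : P * Hᵀ = kalmanGain P H R * (H * P * Hᵀ + R) := by
    rw [kalmanGain, nonsing_inv_mul_cancel_right _ _ hS]
  have hassoc : kalmanGain P H R * H * P * Hᵀ = kalmanGain P H R * (H * P * Hᵀ) := by
    simp only [Matrix.mul_assoc]
  rw [Matrix.sub_mul, hPH, hassoc, ← Matrix.mul_sub, add_sub_cancel_left,
    mul_nonsing_inv_cancel_right _ _ hR]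

/-- The weighted least squares fusion solution equals the Kalman update:
with `H_F = [I; H]`, `R_F = blockdiag(P₋, R)`, `z_F = [x̂₋; z]`,
`((H_F)ᵀ(R_F)⁻¹H_F)⁻¹(H_F)ᵀ(R_F)⁻¹ z_F = x̂₋ + K(z − Hx̂₋)` where
`S = HP₋Hᵀ + R` and `K = P₋HᵀS⁻¹`. -/
theorem fusion_eq_kalman_update {n m : ℕ}
    (Pm : Matrix (Fin n) (Fin n) ℝ) (R : Matrix (Fin m) (Fin m) ℝ)
    (H : Matrix (Fin m) (Fin n) ℝ) (xhat : Fin n → ℝ) (z : Fin m → ℝ)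
    (hP : Pm.PosDef) (hR : R.PosDef)
    (hS : IsUnit (H * Pm * Hᵀ + R).det) :
    let HF : Matrix (Fin n ⊕ Fin m) (Fin n) ℝ :=
      Matrix.fromRows (1 : Matrix (Fin n) (Fin n) ℝ) H
    let RF : Matrix (Fin n ⊕ Fin m) (Fin n ⊕ Fin m) ℝ :=
      Matrix.fromBlocks Pm 0 0 R
    let zF : Fin n ⊕ Fin m → ℝ := Sum.elim xhat z
    let K := Pm * Hᵀ * (H * Pm * Hᵀ + R)⁻¹
    ((HFᵀ * RF⁻¹ * HF)⁻¹ * HFᵀ * RF⁻¹).mulVec zF =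
      xhat + K.mulVec (z - H.mulVec xhat) := by
  intro HF RF zF K
  have hPu : IsUnit Pm.det := hP.det_pos.ne'.isUnit
  have hRu : IsUnit R.det := hR.det_pos.ne'.isUnit
  have hweight : HFᵀ * RF⁻¹ = fromCols Pm⁻¹ (Hᵀ * R⁻¹) :=
    transpose_fromRows_one_mul_inv_fromBlocks hPu hRu H
  have hinfo : HFᵀ * RF⁻¹ * HF = Pm⁻¹ + Hᵀ * R⁻¹ * H := by
    rw [hweight, fromCols_mul_fromRows, Matrix.mul_one]
  have hcov := inv_add_transpose_mul_inv_mul_eq_sub_kalmanGain H hPu hRu hS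
  have hprior : (Pm⁻¹ + Hᵀ * R⁻¹ * H)⁻¹ * Pm⁻¹ = 1 - K * H := by
    rw [hcov, Matrix.sub_mul, mul_nonsing_inv_cancel_right _ _ hPu, mul_nonsing_inv _ hPu]
    rfl
  have hgain : (Pm⁻¹ + Hᵀ * R⁻¹ * H)⁻¹ * (Hᵀ * R⁻¹) = K := by
    rw [hcov, ← Matrix.mul_assoc]
    exact sub_kalmanGain_mul_mul_mul_transpose_mul_inv_eq H hRu hS
  rw [hinfo, Matrix.mul_assoc, hweight, mul_fromCols, fromCols_mulVec_sumElim, hprior, hgain,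
    sub_mulVec, one_mulVec, mulVec_sub, ← mulVec_mulVec]
  abel
end
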